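/- Let μ ∈ ℝ, σ ≥ 0, and let V be a measure on ℝ with V({0}) = 0 and ∫_ℝ min(1, t²) dV(t) < ∞; let f be the associated Lévy exponent f(ξ) = iμξ − σ²ξ²/2 + ∫_ℝ (e^{iξt} − 1 − iξt·1_{|t|≤1}(t)) dV(t). Let 𝕋^d carry its normalized Haar probability measure λ. Suppose 0 < ε ≤ 1 and M ≥ 1 satisfy V({t : |t| > M}) ≤ ε, and suppose φ : 𝕋^d → ℝ is square-integrable with ‖φ‖_{L²(𝕋^d)} ≤ ε/M. Then | ∫_{𝕋^d} f(φ(r)) dλ(r) | ≤ κ ε, where κ = |μ| + σ²/2 + ∫_ℝ min(1, t²) dV(t) + 2 < ∞. -/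

import Mathlib

/-!
On `|t| ≤ 1`, `1 < |t| ≤ M` and `M < |t|` the jump integrand of `f(ξ)` is bounded by `ξ²t²`,
`M|ξ|` and `2`, all multiples of `min 1 t²`. Hence
`‖f ξ‖ ≤ (|μ| + M b)|ξ| + (σ²/2 + a)ξ² + 2c`, where `a`, `b`, `c` are the masses of
`min 1 t² dV` on the three regions, so that `a + b ≤ ∫ min 1 t² dV` and `c ≤ V{M < |t|} ≤ ε`.
Integrating over the torus, `∫ |φ| ≤ ‖φ‖₂ ≤ ε/M` and `∫ φ² ≤ (ε/M)² ≤ ε`; the factor `M` in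
front of `b` is absorbed by `ε/M`.
-/

open MeasureTheory

/-- The Lévy exponent associated with the triplet `(μ, σ², V)` via the
Lévy–Khintchine representation. -/
noncomputable def levyExponent (μ σ : ℝ) (V : Measure ℝ) (ξ : ℝ) : ℂ :=
  Complex.I * (μ : ℂ) * (ξ : ℂ) - (σ : ℂ) ^ 2 * (ξ : ℂ) ^ 2 / 2 +
    ∫ t, (Complex.exp (Complex.I * (ξ : ℂ) * (t : ℂ)) - 1 -
      Complex.I * (ξ : ℂ) * Set.indicator {s : ℝ | |s| ≤ 1} (fun s : ℝ => (s : ℂ)) t) ∂V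

open Complex

theorem norm_exp_I_mul_ofReal_sub_one_sub_le (x : ℝ) :
    ‖exp (I * x) - 1 - I * x‖ ≤ x ^ 2 := by
  have hderiv (s : ℝ) :
      HasDerivAt (fun s : ℝ => exp (I * s) - I * s) (I * (exp (I * s) - 1)) s := by
    have h := ((hasDerivAt_id (s : ℂ)).comp_ofReal).const_mul I
    simp only [id, mul_one] at h
    exact (h.cexp.sub h).congr_deriv (by ring)
  have hbound : ∀ s ∈ Metric.closedBall (0 : ℝ) |x|, ‖I * (exp (I * s) - 1)‖ ≤ |x| := by
    intro s hs
    rw [norm_mul, norm_I, one_mul]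
    exact Real.norm_exp_I_mul_ofReal_sub_one_le.trans (by simpa using hs)
  have := (convex_closedBall (0 : ℝ) |x|).norm_image_sub_le_of_norm_hasDerivWithin_le
    (fun s _ => (hderiv s).hasDerivWithinAt) hbound (Metric.mem_closedBall_self (abs_nonneg x))
    (by simp : x ∈ Metric.closedBall (0 : ℝ) |x|)
  simpa [sub_sub, add_comm, ← sq_abs x, sq] using this

noncomputable def levyIntegrand (ξ t : ℝ) : ℂ :=
  exp (I * ξ * t) - 1 - I * ξ * Set.indicator {s : ℝ | |s| ≤ 1} (fun s : ℝ => (s : ℂ)) t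

theorem levyExponent_eq (μ σ : ℝ) (V : Measure ℝ) (ξ : ℝ) :
    levyExponent μ σ V ξ = I * μ * ξ - σ ^ 2 * ξ ^ 2 / 2 + ∫ t, levyIntegrand ξ t ∂V :=
  rfl

theorem norm_levyIntegrand_le_of_abs_le_one (ξ : ℝ) {t : ℝ} (ht : |t| ≤ 1) :
    ‖levyIntegrand ξ t‖ ≤ ξ ^ 2 * t ^ 2 := by
  have h := norm_exp_I_mul_ofReal_sub_one_sub_le (ξ * t)
  rw [levyIntegrand, Set.indicator_of_mem (by exact ht)]
  push_cast at h
  rwa [← mul_assoc, mul_pow] at h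

theorem levyIntegrand_of_one_lt_abs (ξ : ℝ) {t : ℝ} (ht : 1 < |t|) :
    levyIntegrand ξ t = exp (I * ((ξ * t : ℝ) : ℂ)) - 1 := by
  rw [levyIntegrand, Set.indicator_of_notMem (by simpa using ht)]
  push_cast
  ring_nf

theorem norm_levyIntegrand_le_mul_of_one_lt_abs (ξ : ℝ) {t : ℝ} (ht : 1 < |t|) :
    ‖levyIntegrand ξ t‖ ≤ |ξ| * |t| := by
  rw [levyIntegrand_of_one_lt_abs ξ ht, ← abs_mul]
  exact Real.norm_exp_I_mul_ofReal_sub_one_le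

theorem norm_levyIntegrand_le_two_of_one_lt_abs (ξ : ℝ) {t : ℝ} (ht : 1 < |t|) :
    ‖levyIntegrand ξ t‖ ≤ 2 := by
  rw [levyIntegrand_of_one_lt_abs ξ ht]
  refine (norm_sub_le _ _).trans ?_
  rw [mul_comm, norm_exp_ofReal_mul_I, norm_one]
  norm_num

theorem norm_levyIntegrand_le_indicator {M : ℝ} (hM : 1 ≤ M) (ξ t : ℝ) :
    ‖levyIntegrand ξ t‖ ≤
      ξ ^ 2 * {s : ℝ | |s| ≤ 1}.indicator (fun s => min 1 (s ^ 2)) t +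
      M * |ξ| * {s : ℝ | 1 < |s| ∧ |s| ≤ M}.indicator (fun s => min 1 (s ^ 2)) t +
      2 * {s : ℝ | M < |s|}.indicator (fun s => min 1 (s ^ 2)) t := by
  rcases le_or_gt |t| 1 with h1 | h1
  · have hmin : min 1 (t ^ 2) = t ^ 2 := min_eq_right (by nlinarith [sq_abs t, abs_nonneg t])
    simp only [Set.indicator, Set.mem_ofPred_eq, h1, not_lt.2 h1, not_lt.2 (h1.trans hM),
      false_and, if_true, if_false, hmin]
    simpa using norm_levyIntegrand_le_of_abs_le_one ξ h1
  have hmin : min 1 (t ^ 2) = 1 := min_eq_left (by nlinarith [sq_abs t, abs_nonneg t])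
  rcases le_or_gt |t| M with h2 | h2
  · simp only [Set.indicator, Set.mem_ofPred_eq, h1, h2, not_le.2 h1, not_lt.2 h2, and_self,
      if_true, if_false, hmin]
    have := norm_levyIntegrand_le_mul_of_one_lt_abs ξ h1
    nlinarith [abs_nonneg ξ]
  · simp only [Set.indicator, Set.mem_ofPred_eq, h2, not_le.2 h1, not_le.2 h2, and_false,
      if_true, if_false, hmin]
    simpa using norm_levyIntegrand_le_two_of_one_lt_abs ξ h1

noncomputable def truncatedMoment (V : Measure ℝ) (s : Set ℝ) : ℝ :=
  ∫ t in s, min 1 (t ^ 2) ∂V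

theorem truncatedMoment_nonneg (V : Measure ℝ) (s : Set ℝ) : 0 ≤ truncatedMoment V s :=
  integral_nonneg fun t => by positivity

theorem truncatedMoment_le_measureReal {V : Measure ℝ} {s : Set ℝ} (hs : V s < ⊤) :
    truncatedMoment V s ≤ V.real s := by
  have hw : ∀ t ∈ s, ‖min 1 (t ^ 2)‖ ≤ (1 : ℝ) := fun t _ => by
    rw [Real.norm_of_nonneg (by positivity)]
    exact min_le_left _ _
  have h := norm_setIntegral_le_of_norm_le_const hs hw
  rw [one_mul, Real.norm_eq_abs] at h
  exact (le_abs_self _).trans h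

section LevyMeasure

variable {V : Measure ℝ} (hV : ∫⁻ t, ENNReal.ofReal (min 1 (t ^ 2)) ∂V < ⊤)
include hV

theorem integrable_min_one_sq : Integrable (fun t : ℝ => min 1 (t ^ 2)) V := by
  refine ⟨by fun_prop, ?_⟩
  rwa [hasFiniteIntegral_iff_ofReal (.of_forall fun t => by positivity)]

theorem norm_integral_levyIntegrand_le {M : ℝ} (hM : 1 ≤ M) (ξ : ℝ) :
    ‖∫ t, levyIntegrand ξ t ∂V‖ ≤
      ξ ^ 2 * truncatedMoment V {s | |s| ≤ 1} +
      M * |ξ| * truncatedMoment V {s | 1 < |s| ∧ |s| ≤ M} +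
      2 * truncatedMoment V {s | M < |s|} := by
  have hw := integrable_min_one_sq hV
  have hA : MeasurableSet {s : ℝ | |s| ≤ 1} := measurableSet_le (by fun_prop) (by fun_prop)
  have hB : MeasurableSet {s : ℝ | 1 < |s| ∧ |s| ≤ M} :=
    (measurableSet_lt measurable_const continuous_abs.measurable).inter
      (measurableSet_le continuous_abs.measurable measurable_const)
  have hC : MeasurableSet {s : ℝ | M < |s|} := measurableSet_lt (by fun_prop) (by fun_prop)
  have hA' := (hw.indicator hA).const_mul (ξ ^ 2)
  have hB' := (hw.indicator hB).const_mul (M * |ξ|)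
  have hC' := (hw.indicator hC).const_mul 2
  refine (norm_integral_le_of_norm_le ((hA'.fun_add hB').fun_add hC')
    (.of_forall (norm_levyIntegrand_le_indicator hM ξ))).trans_eq ?_
  rw [integral_add (hA'.fun_add hB') hC', integral_add hA' hB', integral_const_mul,
    integral_const_mul, integral_const_mul, integral_indicator hA, integral_indicator hB,
    integral_indicator hC]
  rfl

theorem truncatedMoment_add_le {s₁ s₂ : Set ℝ} (hs : Disjoint s₁ s₂) (hs₂ : MeasurableSet s₂) :
    truncatedMoment V s₁ + truncatedMoment V s₂ ≤
      (∫⁻ t, ENNReal.ofReal (min 1 (t ^ 2)) ∂V).toReal := by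
  have hw := integrable_min_one_sq hV
  have hw_nonneg : 0 ≤ᵐ[V] fun t : ℝ => min 1 (t ^ 2) := .of_forall fun t => by positivity
  rw [truncatedMoment, truncatedMoment, ← setIntegral_union hs hs₂ hw.integrableOn hw.integrableOn,
    ← integral_eq_lintegral_of_nonneg_ae hw_nonneg hw.1]
  exact setIntegral_le_integral hw hw_nonneg

theorem norm_levyExponent_le (μ σ : ℝ) {M : ℝ} (hM : 1 ≤ M) (ξ : ℝ) :
    ‖levyExponent μ σ V ξ‖ ≤
      (|μ| + M * truncatedMoment V {s | 1 < |s| ∧ |s| ≤ M}) * |ξ| +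
      (σ ^ 2 / 2 + truncatedMoment V {s | |s| ≤ 1}) * ξ ^ 2 +
      2 * truncatedMoment V {s | M < |s|} := by
  have hdrift : ‖I * μ * ξ‖ = |μ| * |ξ| := by simp
  have hdiffusion : ‖(σ : ℂ) ^ 2 * ξ ^ 2 / 2‖ = σ ^ 2 / 2 * ξ ^ 2 := by
    rw [← ofReal_pow, ← ofReal_pow, ← ofReal_mul, ← ofReal_ofNat, ← ofReal_div, norm_real,
      Real.norm_of_nonneg (by positivity)]
    ring
  have hjump := norm_integral_levyIntegrand_le hV hM ξ
  calc ‖levyExponent μ σ V ξ‖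
      ≤ ‖I * μ * ξ‖ + ‖(σ : ℂ) ^ 2 * ξ ^ 2 / 2‖ + ‖∫ t, levyIntegrand ξ t ∂V‖ := by
        rw [levyExponent_eq]
        exact (norm_add_le _ _).trans (by gcongr; exact norm_sub_le _ _)
    _ ≤ _ := by
        rw [hdrift, hdiffusion]
        linarith

end LevyMeasure

section Moments

variable {Ω : Type*} [MeasurableSpace Ω] {P : Measure Ω} {φ : Ω → ℝ} {η : ℝ}

theorem integral_sq_le_of_eLpNorm_two_le (hφ : AEStronglyMeasurable φ P) (hη : 0 ≤ η)
    (h : eLpNorm φ 2 P ≤ ENNReal.ofReal η) : ∫ ω, φ ω ^ 2 ∂P ≤ η ^ 2 := by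
  have hnorm : lpNorm φ 2 P ≤ η := by
    rw [← toReal_eLpNorm hφ]
    exact ENNReal.toReal_le_of_le_ofReal hη h
  rw [lpNorm_eq_integral_norm_rpow_toReal two_ne_zero ENNReal.ofNat_ne_top hφ,
    ENNReal.toReal_ofNat,
    Real.rpow_inv_le_iff_of_pos (integral_nonneg fun ω => by positivity) hη two_pos] at hnorm
  simpa [Real.norm_eq_abs, sq_abs] using hnorm

theorem integral_abs_le_of_eLpNorm_two_le [IsProbabilityMeasure P]
    (hφ : AEStronglyMeasurable φ P) (hη : 0 ≤ η) (h : eLpNorm φ 2 P ≤ ENNReal.ofReal η) :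
    ∫ ω, |φ ω| ∂P ≤ η := by
  have h1 := ENNReal.toReal_le_of_le_ofReal hη
    ((eLpNorm_le_eLpNorm_of_exponent_le one_le_two hφ).trans h)
  rwa [toReal_eLpNorm hφ, lpNorm_one_eq_integral_norm hφ] at h1

theorem norm_integral_comp_le_of_norm_le {E : Type*} [NormedAddCommGroup E] [NormedSpace ℝ E]
    [IsProbabilityMeasure P] {g : ℝ → E} {α β γ : ℝ} (hα : 0 ≤ α) (hβ : 0 ≤ β)
    (hg : ∀ ξ, ‖g ξ‖ ≤ α * |ξ| + β * ξ ^ 2 + γ) (hφ : MemLp φ 2 P) (hη : 0 ≤ η)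
    (hφη : eLpNorm φ 2 P ≤ ENNReal.ofReal η) :
    ‖∫ ω, g (φ ω) ∂P‖ ≤ α * η + β * η ^ 2 + γ := by
  have h1 := ((hφ.integrable one_le_two).abs.const_mul α)
  have h2 := hφ.integrable_sq.const_mul β
  have h3 := integrable_const (μ := P) γ
  calc ‖∫ ω, g (φ ω) ∂P‖ ≤ ∫ ω, (α * |φ ω| + β * φ ω ^ 2 + γ) ∂P :=
        norm_integral_le_of_norm_le ((h1.fun_add h2).fun_add h3) (.of_forall fun ω => hg (φ ω))
    _ = α * ∫ ω, |φ ω| ∂P + β * ∫ ω, φ ω ^ 2 ∂P + γ := by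
        rw [integral_add (h1.fun_add h2) h3, integral_add h1 h2, integral_const_mul,
          integral_const_mul, integral_const, probReal_univ, one_smul]
    _ ≤ α * η + β * η ^ 2 + γ := by
        gcongr
        · exact integral_abs_le_of_eLpNorm_two_le hφ.1 hη hφη
        · exact integral_sq_le_of_eLpNorm_two_le hφ.1 hη hφη

end Moments

instance : IsProbabilityMeasure (volume : Measure (AddCircle (1 : ℝ))) :=
  ⟨by rw [AddCircle.measure_univ, ENNReal.ofReal_one]⟩

theorem stmt9_general (d : ℕ) (μ σ : ℝ) (V : Measure ℝ)
    (hV : ∫⁻ t, ENNReal.ofReal (min 1 (t ^ 2)) ∂V < ⊤)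
    (ε M : ℝ) (hε : 0 < ε) (hε1 : ε ≤ 1) (hM : 1 ≤ M)
    (hVM : V {s : ℝ | M < |s|} ≤ ENNReal.ofReal ε)
    (φ : (Fin d → AddCircle (1 : ℝ)) → ℝ) (hφ : MemLp φ 2 volume)
    (hφ2 : eLpNorm φ 2 volume ≤ ENNReal.ofReal (ε / M)) :
    ‖∫ r, levyExponent μ σ V (φ r) ∂volume‖ ≤
      (|μ| + σ ^ 2 / 2 + (∫⁻ t, ENNReal.ofReal (min 1 (t ^ 2)) ∂V).toReal + 2) * ε := by
  set a := truncatedMoment V {s | |s| ≤ 1}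
  set b := truncatedMoment V {s | 1 < |s| ∧ |s| ≤ M}
  set c := truncatedMoment V {s | M < |s|}
  have hbound := norm_integral_comp_le_of_norm_le
    (add_nonneg (abs_nonneg μ) (mul_nonneg (by linarith) (truncatedMoment_nonneg V _)))
    (add_nonneg (by positivity) (truncatedMoment_nonneg V _))
    (norm_levyExponent_le hV μ σ hM) hφ (by positivity) hφ2
  have hab : a + b ≤ (∫⁻ t, ENNReal.ofReal (min 1 (t ^ 2)) ∂V).toReal :=
    truncatedMoment_add_le hV (Set.disjoint_left.2 fun t h₁ h₂ => (not_le.2 h₂.1) h₁)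
      ((measurableSet_lt measurable_const continuous_abs.measurable).inter
        (measurableSet_le continuous_abs.measurable measurable_const))
  have hc : c ≤ ε := (truncatedMoment_le_measureReal (hVM.trans_lt ENNReal.ofReal_lt_top)).trans
    (ENNReal.toReal_le_of_le_ofReal hε.le hVM)
  have hη : ε / M ≤ ε := div_le_self hε.le hM
  have hη2 : (ε / M) ^ 2 ≤ ε := by
    calc (ε / M) ^ 2 ≤ ε ^ 2 := by gcongr
      _ ≤ ε := by nlinarith
  have hMη : M * (ε / M) = ε := by field_simp
  calc _ ≤ (|μ| + M * b) * (ε / M) + (σ ^ 2 / 2 + a) * (ε / M) ^ 2 + 2 * c := hbound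
    _ = |μ| * (ε / M) + b * ε + (σ ^ 2 / 2 + a) * (ε / M) ^ 2 + 2 * c := by
        linear_combination b * hMη
    _ ≤ |μ| * ε + b * ε + (σ ^ 2 / 2 + a) * ε + 2 * ε := by
        have ha := truncatedMoment_nonneg V {s | |s| ≤ 1}
        gcongr
    _ = (|μ| + σ ^ 2 / 2 + (a + b) + 2) * ε := by ring
    _ ≤ _ := by gcongr

theorem stmt9 (d : ℕ) (hd : 1 ≤ d) (μ σ : ℝ) (hσ : 0 ≤ σ) (V : Measure ℝ)
    (hV0 : V {0} = 0) (hV : ∫⁻ t, ENNReal.ofReal (min 1 (t ^ 2)) ∂V < ⊤)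
    (ε M : ℝ) (hε : 0 < ε) (hε1 : ε ≤ 1) (hM : 1 ≤ M)
    (hVM : V {s : ℝ | M < |s|} ≤ ENNReal.ofReal ε)
    (φ : (Fin d → AddCircle (1 : ℝ)) → ℝ) (hφ : MemLp φ 2 volume)
    (hφ2 : eLpNorm φ 2 volume ≤ ENNReal.ofReal (ε / M)) :
    ‖∫ r, levyExponent μ σ V (φ r) ∂volume‖ ≤
      (|μ| + σ ^ 2 / 2 + (∫⁻ t, ENNReal.ofReal (min 1 (t ^ 2)) ∂V).toReal + 2) * ε :=
  stmt9_general d μ σ V hV ε M hε hε1 hM hVM φ hφ hφ2
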